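/- In a connected graph, the distance between two distinct blocks B_1 and B_2 (minimum over vertices x in B_1, y in B_2 of d(x,y)) is zero if and only if B_1 and B_2 share a vertex; and for three blocks, if d(B_2,B_3) > d(B_1,B_2) + d(B_1,B_3), then every path from a vertex of B_2 to a vertex of B_3 realizing the distance passes through at least two distinct vertices of B_1. -/

import Mathlib

open scoped Classical

/-- A finite multigraph: edges with a source and target vertex. -/
structure Multigraph (V E : Type) where
  src : E → V
  tgt : E → V

/-- A dart is an oriented edge: an edge together with a direction. -/
abbrev Dart (E : Type) := E × Bool

namespace Multigraph

variable {V E : Type}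

/-- Source of a dart. -/
def dsrc (G : Multigraph V E) (d : Dart E) : V := if d.2 then G.src d.1 else G.tgt d.1

/-- Target of a dart. -/
def dtgt (G : Multigraph V E) (d : Dart E) : V := if d.2 then G.tgt d.1 else G.src d.1

/-- A closed walk: a nonempty cyclically consistent list of darts. -/
def IsClosedWalk (G : Multigraph V E) (w : List (Dart E)) : Prop :=
  w ≠ [] ∧ List.Chain' (fun d d' => G.dtgt d = G.dsrc d') w ∧
    ∀ dl ∈ w.getLast?, ∀ dh ∈ w.head?, G.dtgt dl = G.dsrc dh

/-- A cycle: a closed walk repeating no edges and no vertices. -/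
def IsCycle (G : Multigraph V E) (w : List (Dart E)) : Prop :=
  G.IsClosedWalk w ∧ (w.map Prod.fst).Nodup ∧ (w.map G.dsrc).Nodup

/-- A walk from `u` to `v`. -/
def IsWalkFrom (G : Multigraph V E) (w : List (Dart E)) (u v : V) : Prop :=
  List.Chain' (fun d d' => G.dtgt d = G.dsrc d') w ∧
    (w = [] → u = v) ∧ (∀ d ∈ w.head?, G.dsrc d = u) ∧ (∀ d ∈ w.getLast?, G.dtgt d = v)

/-- Connectivity: any two vertices are joined by a walk. -/
def Conn (G : Multigraph V E) : Prop := ∀ u v : V, ∃ w, G.IsWalkFrom w u v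

/-- The 1-chain (with `ℤ` coefficients) of a single dart. -/
noncomputable def dartChain (d : Dart E) : E → ℤ :=
  fun e => if d.1 = e then (if d.2 then 1 else -1) else 0

/-- The 1-chain of a walk. -/
noncomputable def chain (w : List (Dart E)) : E → ℤ := (w.map dartChain).sum

/-- The length of a walk given edge lengths `l`. -/
def walkLength (l : E → ℝ) (w : List (Dart E)) : ℝ := (w.map fun d => l d.1).sum

/-- The set of (unoriented) edges used by a walk. -/
def edges (w : List (Dart E)) : Set E := {e | ∃ b, (e, b) ∈ w}

/-- The set of vertices visited by a closed walk. -/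
def vertsOf (G : Multigraph V E) (w : List (Dart E)) : Set V := {v | ∃ d ∈ w, G.dsrc d = v}

/-- Restriction of a graph to a set of edges. -/
def restrict (G : Multigraph V E) (S : Set E) : Multigraph V S where
  src e := G.src e.1
  tgt e := G.tgt e.1

/-- Deletion of a set of vertices (and all incident edges). -/
def deleteVerts (G : Multigraph V E) (X : Set V) :
    Multigraph {v // v ∉ X} {e // G.src e ∉ X ∧ G.tgt e ∉ X} where
  src e := ⟨G.src e.1, e.2.1⟩
  tgt e := ⟨G.tgt e.1, e.2.2⟩

/-- Degree of a vertex (loops count twice). -/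
noncomputable def degree (G : Multigraph V E) [Fintype E] (v : V) : ℕ :=
  (Finset.univ.filter fun e => G.src e = v).card +
  (Finset.univ.filter fun e => G.tgt e = v).card

/-- The boundary of a 1-chain. -/
noncomputable def boundary (G : Multigraph V E) [Fintype E] (x : E → ℤ) : V → ℤ :=
  fun v => ∑ e, x e * ((if G.tgt e = v then 1 else 0) - (if G.src e = v then 1 else 0))

/-- The first homology `H₁(G,ℤ)`, as the kernel of the boundary map. -/
def H1 (G : Multigraph V E) [Fintype E] : Submodule ℤ (E → ℤ) where
  carrier := {x | G.boundary x = 0}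
  add_mem' := by
    intro a b ha hb
    have h : G.boundary (a + b) = G.boundary a + G.boundary b := by
      funext v
      simp [boundary, add_mul, Finset.sum_add_distrib]
    simp only [Set.mem_setOf_eq] at *
    rw [h, ha, hb, add_zero]
  zero_mem' := by
    simp only [Set.mem_setOf_eq]
    funext v
    simp [boundary]
  smul_mem' := by
    intro c x hx
    have h : G.boundary (c • x) = c • G.boundary x := by
      funext v
      simp [boundary, Finset.mul_sum, mul_assoc]
    simp only [Set.mem_setOf_eq] at *
    rw [h, hx, smul_zero]

/-- The path metric induced by edge lengths. -/
noncomputable def gdist (G : Multigraph V E) (l : E → ℝ) (u v : V) : ℝ :=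
  sInf {x | ∃ w, G.IsWalkFrom w u v ∧ walkLength l w = x}

/-- Minimal length of a closed walk in a given homology class. -/
noncomputable def minLen (G : Multigraph V E) (l : E → ℝ) (h : E → ℤ) : ℝ :=
  sInf {x | ∃ w, G.IsClosedWalk w ∧ chain w = h ∧ walkLength l w = x}

end Multigraph

open Multigraph

/-- The relation generating block equivalence: two cycles are related if they share an edge. -/
def CycleRel {V E : Type} (G : Multigraph V E) :
    {w : List (Dart E) // G.IsCycle w} → {w : List (Dart E) // G.IsCycle w} → Prop :=
  fun a b => ∃ e, e ∈ Multigraph.edges a.1 ∧ e ∈ Multigraph.edges b.1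

/-- Blocks: equivalence classes of cycles under the relation generated by edge-sharing. -/
def Block {V E : Type} (G : Multigraph V E) := Quot (CycleRel G)

/-- The set of vertices lying on a block. -/
def vertsOfBlock {V E : Type} (G : Multigraph V E) (B : Block G) : Set V :=
  {v | ∃ c : {w : List (Dart E) // G.IsCycle w},
    Quot.mk (CycleRel G) c = B ∧ v ∈ G.vertsOf c.1}

/-- A cut vertex: a vertex whose deletion disconnects the graph. -/
def IsCutVertex {V E : Type} (G : Multigraph V E) (v : V) : Prop :=
  ¬ (G.deleteVerts {v}).Conn

/-- The distance between two blocks: the infimum of distances between their vertex sets. -/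
noncomputable def blockDist {V E : Type} (G : Multigraph V E) (l : E → ℝ)
    (B1 B2 : Block G) : ℝ :=
  sInf {x | ∃ u ∈ vertsOfBlock G B1, ∃ v ∈ vertsOfBlock G B2, G.gdist l u v = x}

/-- The set of vertices visited by a walk starting at `u`. -/
def walkVerts {V E : Type} (G : Multigraph V E) (u : V) (w : List (Dart E)) : Set V :=
  insert u {v | ∃ d ∈ w, G.dtgt d = v}

/-!
Distinct vertices are at positive distance, since edges have positive length and shortest walks
exist, and block distances are attained; this gives the first claim.

For the second, call a walk `B`-free (`NoDartInside`) if none of its darts has both endpoints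
in the block `B`. Two vertices `c, c'` of `B` joined by a `B`-free walk coincide: otherwise
shortcut the walk to a path; it leaves `B` at `c` and first re-enters it at some `c'' ≠ c`, and
this piece together with a path inside `B` from `c''` back to `c` is a cycle sharing an edge
with `B`, hence a cycle of `B`, although it leaves `B`.

A walk from `B₂` to `B₃` meeting `B₁` in at most one vertex shortens to a `B₁`-free path. Extend
it at both ends inside `B₂` and `B₃` (a non-loop edge of another block joining two vertices of
`B₁` would lie in `B₁`), and then along shortest walks to `B₁`, stopping at their first vertices
`α`, `β` in `B₁`. The result is `B₁`-free, so `α = β`, and the triangle inequality through `α`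
gives `d(B₂, B₃) ≤ d(B₁, B₂) + d(B₁, B₃)`.
-/

namespace Multigraph

variable {V E : Type}

def dflip (d : Dart E) : Dart E := (d.1, !d.2)

@[simp] lemma dsrc_dflip (G : Multigraph V E) (d : Dart E) : G.dsrc (dflip d) = G.dtgt d := by
  cases d with | mk e b => cases b <;> rfl

@[simp] lemma dtgt_dflip (G : Multigraph V E) (d : Dart E) : G.dtgt (dflip d) = G.dsrc d := by
  cases d with | mk e b => cases b <;> rfl

inductive IsWalk (G : Multigraph V E) : V → List (Dart E) → V → Prop
  | nil (u : V) : IsWalk G u [] u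
  | cons (d : Dart E) {w : List (Dart E)} {v : V} :
      IsWalk G (G.dtgt d) w v → IsWalk G (G.dsrc d) (d :: w) v

variable {G : Multigraph V E}

@[simp] lemma isWalk_nil {u v : V} : G.IsWalk u [] v ↔ u = v :=
  ⟨fun h => by cases h; rfl, fun h => h ▸ .nil u⟩

@[simp] lemma isWalk_cons {u v : V} {d : Dart E} {w : List (Dart E)} :
    G.IsWalk u (d :: w) v ↔ G.dsrc d = u ∧ G.IsWalk (G.dtgt d) w v :=
  ⟨fun h => by cases h; exact ⟨rfl, ‹_›⟩, fun ⟨hu, h⟩ => hu ▸ .cons d h⟩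

lemma isWalkFrom_iff_isChain {w : List (Dart E)} {u v : V} :
    G.IsWalkFrom w u v ↔ List.IsChain (fun d d' => G.dtgt d = G.dsrc d') w ∧ (w = [] → u = v) ∧
      (∀ d ∈ w.head?, G.dsrc d = u) ∧ ∀ d ∈ w.getLast?, G.dtgt d = v :=
  Iff.rfl

lemma isWalkFrom_iff_isWalk {w : List (Dart E)} {u v : V} :
    G.IsWalkFrom w u v ↔ G.IsWalk u w v := by
  induction w generalizing u with
  | nil => simp [isWalkFrom_iff_isChain]
  | cons d w ih =>
    rw [isWalk_cons, ← ih]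
    cases w with
    | nil => simp [isWalkFrom_iff_isChain, eq_comm]
    | cons a w =>
      simp only [isWalkFrom_iff_isChain, List.isChain_cons_cons, List.head?_cons,
        List.getLast?_cons_cons, Option.mem_def, Option.some.injEq, forall_eq']
      simp only [reduceCtorEq, IsEmpty.forall_iff, true_and]
      tauto

lemma IsWalk.append {u v z : V} {w₁ w₂ : List (Dart E)} (h₁ : G.IsWalk u w₁ v)
    (h₂ : G.IsWalk v w₂ z) : G.IsWalk u (w₁ ++ w₂) z := by
  induction h₁ with
  | nil => exact h₂
  | cons d _ ih => exact .cons d (ih h₂)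

lemma IsWalk.of_append {u v : V} {w₁ w₂ : List (Dart E)} (h : G.IsWalk u (w₁ ++ w₂) v) :
    ∃ m, G.IsWalk u w₁ m ∧ G.IsWalk m w₂ v := by
  induction w₁ generalizing u with
  | nil => exact ⟨u, .nil u, h⟩
  | cons d w₁ ih =>
    rw [List.cons_append, isWalk_cons] at h
    obtain ⟨rfl, h⟩ := h
    obtain ⟨m, h₁, h₂⟩ := ih h
    exact ⟨m, .cons d h₁, h₂⟩

lemma IsWalk.reverse {u v : V} {w : List (Dart E)} (h : G.IsWalk u w v) :
    G.IsWalk v (w.reverse.map dflip) u := by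
  induction h with
  | nil u => exact .nil u
  | cons d _ ih => simpa using ih.append (isWalk_cons.mpr ⟨by simp, by simp⟩)

lemma IsWalk.ne_nil {u v : V} {w : List (Dart E)} (h : G.IsWalk u w v) (huv : u ≠ v) :
    w ≠ [] := by
  rintro rfl
  exact huv (isWalk_nil.mp h)

lemma walkLength_cons (l : E → ℝ) (d : Dart E) (w : List (Dart E)) :
    walkLength l (d :: w) = l d.1 + walkLength l w := by
  simp [walkLength]

lemma walkLength_append (l : E → ℝ) (w₁ w₂ : List (Dart E)) :
    walkLength l (w₁ ++ w₂) = walkLength l w₁ + walkLength l w₂ := by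
  simp [walkLength]

lemma walkLength_reverse_map_dflip (l : E → ℝ) (w : List (Dart E)) :
    walkLength l (w.reverse.map dflip) = walkLength l w := by
  simp [walkLength, Function.comp_def, dflip]

lemma walkLength_le_of_sublist {l : E → ℝ} (hl : ∀ e, 0 < l e) {w₁ w₂ : List (Dart E)}
    (h : w₁.Sublist w₂) : walkLength l w₁ ≤ walkLength l w₂ :=
  (h.map _).sum_le_sum <| by
    simp only [List.mem_map]
    rintro _ ⟨d, -, rfl⟩
    exact (hl d.1).le

lemma walkLength_nonneg {l : E → ℝ} (hl : ∀ e, 0 < l e) (w : List (Dart E)) :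
    0 ≤ walkLength l w := by
  simpa [walkLength] using walkLength_le_of_sublist hl w.nil_sublist

lemma walkLength_pos {l : E → ℝ} (hl : ∀ e, 0 < l e) {w : List (Dart E)} (hw : w ≠ []) :
    0 < walkLength l w := by
  obtain ⟨d, w, rfl⟩ := List.exists_cons_of_ne_nil hw
  rw [walkLength_cons]
  exact add_pos_of_pos_of_nonneg (hl d.1) (walkLength_nonneg hl w)

def vertexList (G : Multigraph V E) (u : V) (w : List (Dart E)) : List V := u :: w.map G.dtgt

lemma vertexList_cons (u : V) (d : Dart E) (w : List (Dart E)) :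
    G.vertexList u (d :: w) = u :: G.vertexList (G.dtgt d) w := rfl

lemma mem_walkVerts_iff {u z : V} {w : List (Dart E)} :
    z ∈ walkVerts G u w ↔ z ∈ G.vertexList u w := by
  simp [walkVerts, vertexList, eq_comm]

lemma IsWalk.vertexList_eq {u v : V} {w : List (Dart E)} (h : G.IsWalk u w v) :
    G.vertexList u w = w.map G.dsrc ++ [v] := by
  induction h with
  | nil => rfl
  | cons d _ ih => simp [vertexList_cons, ih]

lemma vertexList_append (u : V) (w₁ w₂ : List (Dart E)) :
    G.vertexList u (w₁ ++ w₂) = G.vertexList u w₁ ++ w₂.map G.dtgt := by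
  simp [vertexList]

lemma IsWalk.end_mem_vertexList {u v : V} {w : List (Dart E)} (h : G.IsWalk u w v) :
    v ∈ G.vertexList u w := by
  simp [h.vertexList_eq]

lemma dtgt_mem_vertexList (u : V) {w : List (Dart E)} {d : Dart E} (hd : d ∈ w) :
    G.dtgt d ∈ G.vertexList u w :=
  List.mem_cons_of_mem _ (List.mem_map_of_mem hd)

lemma IsWalk.dsrc_mem_vertexList {u v : V} {w : List (Dart E)} (h : G.IsWalk u w v)
    {d : Dart E} (hd : d ∈ w) : G.dsrc d ∈ G.vertexList u w := by
  rw [h.vertexList_eq]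
  exact List.mem_append_left _ (List.mem_map_of_mem hd)

lemma IsWalk.exists_first_hit (P : V → Prop) {u v : V} {w : List (Dart E)}
    (h : G.IsWalk u w v) (hv : P v) :
    ∃ α w₁ w₂, w = w₁ ++ w₂ ∧ G.IsWalk u w₁ α ∧ P α ∧ ∀ d ∈ w₁, ¬ P (G.dsrc d) := by
  induction h with
  | nil u => exact ⟨u, [], [], rfl, .nil u, hv, by simp⟩
  | cons d h ih =>
    by_cases hd : P (G.dsrc d)
    · exact ⟨G.dsrc d, [], _, rfl, .nil _, hd, by simp⟩
    · obtain ⟨α, w₁, w₂, rfl, h₁, hα, hw₁⟩ := ih hv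
      exact ⟨α, d :: w₁, w₂, rfl, .cons d h₁, hα, by simpa [hd] using hw₁⟩

lemma IsWalk.exists_suffix {u v z : V} {w : List (Dart E)} (h : G.IsWalk u w v)
    (hz : z ∈ G.vertexList u w) :
    ∃ q, q.Sublist w ∧ G.IsWalk z q v ∧ (G.vertexList z q).Sublist (G.vertexList u w) := by
  induction h with
  | nil u =>
    obtain rfl : z = u := by simpa [vertexList] using hz
    exact ⟨[], .refl _, .nil z, .refl _⟩
  | cons d h ih =>
    rcases List.mem_cons.mp hz with rfl | hz
    · exact ⟨_, .refl _, .cons d h, .refl _⟩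
    · obtain ⟨q, hq, hqw, hqv⟩ := ih hz
      exact ⟨q, hq.cons d, hqw, hqv.cons _⟩

lemma IsWalk.exists_nodup_sublist {u v : V} {w : List (Dart E)} (h : G.IsWalk u w v) :
    ∃ p, p.Sublist w ∧ G.IsWalk u p v ∧ (G.vertexList u p).Nodup := by
  induction h with
  | nil u => exact ⟨[], .refl _, .nil u, by simp [vertexList]⟩
  | cons d _ ih =>
    obtain ⟨p, hp, hpw, hpn⟩ := ih
    by_cases hd : G.dsrc d ∈ G.vertexList (G.dtgt d) p
    · obtain ⟨q, hq, hqw, hqv⟩ := hpw.exists_suffix hd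
      exact ⟨q, (hq.trans hp).cons d, hqw, hqv.nodup hpn⟩
    · exact ⟨d :: p, hp.cons_cons d, .cons d hpw, List.nodup_cons.mpr ⟨hd, hpn⟩⟩

lemma IsWalk.dsrc_ne_dtgt {u v : V} {w : List (Dart E)} (h : G.IsWalk u w v)
    (hn : (G.vertexList u w).Nodup) {d : Dart E} (hd : d ∈ w) : G.dsrc d ≠ G.dtgt d := by
  induction h with
  | nil => simp at hd
  | cons d' h ih =>
    rw [vertexList_cons, List.nodup_cons] at hn
    rcases List.mem_cons.mp hd with rfl | hd
    · exact fun heq => hn.1 (heq ▸ List.mem_cons_self)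
    · exact ih hn.2 hd

lemma dsrc_eq_or_eq_dtgt_of_fst_eq {d d' : Dart E} (h : d.1 = d'.1) :
    G.dsrc d = G.dsrc d' ∨ G.dsrc d = G.dtgt d' := by
  obtain ⟨e, b⟩ := d
  obtain ⟨e', b'⟩ := d'
  obtain rfl : e = e' := h
  cases b <;> cases b' <;> simp [dsrc, dtgt]

lemma IsWalk.nodup_map_fst {u v : V} {w : List (Dart E)} (h : G.IsWalk u w v)
    (hn : (G.vertexList u w).Nodup) : (w.map Prod.fst).Nodup := by
  induction h with
  | nil => simp
  | cons d h ih =>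
    rw [vertexList_cons, List.nodup_cons] at hn
    refine List.nodup_cons.mpr ⟨?_, ih hn.2⟩
    intro hmem
    obtain ⟨d', hd', he⟩ := List.mem_map.mp hmem
    rcases dsrc_eq_or_eq_dtgt_of_fst_eq (G := G) he.symm with heq | heq
    · exact hn.1 (heq ▸ h.dsrc_mem_vertexList hd')
    · exact hn.1 (heq ▸ dtgt_mem_vertexList _ hd')

lemma IsWalk.nodup_map_dsrc {u v : V} {w : List (Dart E)} (h : G.IsWalk u w v)
    (hn : (G.vertexList u w).Nodup) : (w.map G.dsrc).Nodup :=
  (List.nodup_append.mp (h.vertexList_eq ▸ hn)).1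

lemma IsWalk.end_notMem_map_dsrc {u v : V} {w : List (Dart E)} (h : G.IsWalk u w v)
    (hn : (G.vertexList u w).Nodup) : v ∉ w.map G.dsrc :=
  fun hv => (List.nodup_append.mp (h.vertexList_eq ▸ hn)).2.2 v hv v (List.mem_singleton_self v) rfl

lemma IsClosedWalk.exists_isWalk {w : List (Dart E)} (h : G.IsClosedWalk w) :
    ∃ a ∈ G.vertsOf w, G.IsWalk a w a := by
  obtain ⟨hne, hc, hwrap⟩ := h
  obtain ⟨d₀, w', rfl⟩ := List.exists_cons_of_ne_nil hne
  refine ⟨G.dsrc d₀, ⟨d₀, List.mem_cons_self, rfl⟩, isWalkFrom_iff_isWalk.mp ?_⟩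
  exact ⟨hc, by simp, by simp, fun d hd => hwrap d hd d₀ rfl⟩

lemma IsWalk.exists_isWalk_of_mem_vertsOf {a u v : V} {w : List (Dart E)} (h : G.IsWalk a w a)
    (hu : u ∈ G.vertsOf w) (hv : v ∈ G.vertsOf w) : ∃ p, G.IsWalk u p v ∧ ∀ d ∈ p, d ∈ w := by
  obtain ⟨du, hdu, rfl⟩ := hu
  obtain ⟨dv, hdv, rfl⟩ := hv
  obtain ⟨s, t, rfl⟩ := List.append_of_mem hdu
  obtain ⟨s', t', hst⟩ := List.append_of_mem hdv
  obtain ⟨m, -, hm⟩ := h.of_append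
  obtain ⟨m', hm', hdv'⟩ := (hst ▸ h).of_append
  obtain rfl := (isWalk_cons.mp hm).1
  obtain rfl := (isWalk_cons.mp hdv').1
  refine ⟨(du :: t) ++ s', hm.append hm', fun d hd => ?_⟩
  rcases List.mem_append.mp hd with hd | hd
  · exact List.mem_append_right _ hd
  · exact hst ▸ List.mem_append_left _ hd

lemma IsClosedWalk.dtgt_mem_vertsOf {w : List (Dart E)} (h : G.IsClosedWalk w) {d : Dart E}
    (hd : d ∈ w) : G.dtgt d ∈ G.vertsOf w := by
  obtain ⟨a, ha, hw⟩ := h.exists_isWalk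
  have := dtgt_mem_vertexList (G := G) a hd
  rw [hw.vertexList_eq, List.mem_append, List.mem_map, List.mem_singleton] at this
  obtain ⟨d', hd', heq⟩ | heq := this
  · exact ⟨d', hd', heq⟩
  · exact heq ▸ ha

lemma IsClosedWalk.dsrc_mem_vertsOf_of_fst_mem {w : List (Dart E)} (h : G.IsClosedWalk w)
    {d : Dart E} (hd : d.1 ∈ edges w) : G.dsrc d ∈ G.vertsOf w := by
  obtain ⟨b, hb⟩ := hd
  rcases dsrc_eq_or_eq_dtgt_of_fst_eq (G := G) (d := d) (d' := (d.1, b)) rfl with heq | heq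
  · exact ⟨_, hb, heq.symm⟩
  · exact heq ▸ h.dtgt_mem_vertsOf hb

lemma IsWalk.isCycle {a : V} {w : List (Dart E)} (h : G.IsWalk a w a) (hne : w ≠ [])
    (he : (w.map Prod.fst).Nodup) (hs : (w.map G.dsrc).Nodup) : G.IsCycle w := by
  obtain ⟨hc, -, hhead, hlast⟩ := isWalkFrom_iff_isWalk.mpr h
  exact ⟨⟨hne, hc, fun dl hdl dh hdh => (hlast dl hdl).trans (hhead dh hdh).symm⟩, he, hs⟩

lemma IsWalk.isCycle_append {c c' : V} {p q : List (Dart E)} (hp : G.IsWalk c p c')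
    (hq : G.IsWalk c' q c) (hne : c ≠ c') (hpn : (G.vertexList c p).Nodup)
    (hqn : (G.vertexList c' q).Nodup) (he : (p.map Prod.fst).Disjoint (q.map Prod.fst))
    (hs : (p.map G.dsrc).Disjoint (q.map G.dsrc)) : G.IsCycle (p ++ q) := by
  refine (hp.append hq).isCycle (by simp [hp.ne_nil hne]) ?_ ?_ <;>
    rw [List.map_append, List.nodup_append']
  · exact ⟨hp.nodup_map_fst hpn, hq.nodup_map_fst hqn, he⟩
  · exact ⟨hp.nodup_map_dsrc hpn, hq.nodup_map_dsrc hqn, hs⟩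

def JoinedWithin (G : Multigraph V E) (S : Set E) (u v : V) : Prop :=
  ∃ p, G.IsWalk u p v ∧ ∀ d ∈ p, d.1 ∈ S

namespace JoinedWithin

variable {S T : Set E} {u v z : V}

lemma symm (h : G.JoinedWithin S u v) : G.JoinedWithin S v u := by
  obtain ⟨p, hp, hpS⟩ := h
  refine ⟨p.reverse.map dflip, hp.reverse, fun d hd => ?_⟩
  obtain ⟨d', hd', rfl⟩ := List.mem_map.mp hd
  exact hpS d' (List.mem_reverse.mp hd')

lemma trans (h₁ : G.JoinedWithin S u v) (h₂ : G.JoinedWithin S v z) : G.JoinedWithin S u z := by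
  obtain ⟨p, hp, hpS⟩ := h₁
  obtain ⟨q, hq, hqS⟩ := h₂
  exact ⟨p ++ q, hp.append hq, List.forall_mem_append.mpr ⟨hpS, hqS⟩⟩

lemma mono (h : G.JoinedWithin S u v) (hST : S ⊆ T) : G.JoinedWithin T u v := by
  obtain ⟨p, hp, hpS⟩ := h
  exact ⟨p, hp, fun d hd => hST (hpS d hd)⟩

end JoinedWithin

lemma fst_mem_edges {w : List (Dart E)} {d : Dart E} (hd : d ∈ w) : d.1 ∈ edges w :=
  ⟨d.2, hd⟩

lemma IsClosedWalk.joinedWithin {w : List (Dart E)} (h : G.IsClosedWalk w) {u v : V}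
    (hu : u ∈ G.vertsOf w) (hv : v ∈ G.vertsOf w) : G.JoinedWithin (edges w) u v := by
  obtain ⟨a, -, ha⟩ := h.exists_isWalk
  obtain ⟨p, hp, hpw⟩ := ha.exists_isWalk_of_mem_vertsOf hu hv
  exact ⟨p, hp, fun d hd => fst_mem_edges (hpw d hd)⟩

def NoDartInside (G : Multigraph V E) (S : Set V) (w : List (Dart E)) : Prop :=
  ∀ d ∈ w, G.dsrc d ∉ S ∨ G.dtgt d ∉ S

namespace NoDartInside

variable {S : Set V} {w w' : List (Dart E)}

lemma append (h : G.NoDartInside S w) (h' : G.NoDartInside S w') :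
    G.NoDartInside S (w ++ w') :=
  List.forall_mem_append.mpr ⟨h, h'⟩

lemma subset (h : G.NoDartInside S w) (hw : w' ⊆ w) : G.NoDartInside S w' :=
  fun d hd => h d (hw hd)

lemma reverse (h : G.NoDartInside S w) : G.NoDartInside S (w.reverse.map dflip) := by
  intro d hd
  obtain ⟨d', hd', rfl⟩ := List.mem_map.mp hd
  rw [dsrc_dflip, dtgt_dflip]
  exact (h d' (List.mem_reverse.mp hd')).symm

end NoDartInside

lemma IsWalk.exists_noDartInside {S : Set V} {u v : V} {w : List (Dart E)} (h : G.IsWalk u w v)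
    (hS : (S ∩ walkVerts G u w).Subsingleton) : ∃ p, G.IsWalk u p v ∧ G.NoDartInside S p := by
  obtain ⟨p, hsub, hp, hpn⟩ := h.exists_nodup_sublist
  refine ⟨p, hp, fun d hd => ?_⟩
  by_contra! ⟨hs, ht⟩
  have hdw := hsub.subset hd
  exact hp.dsrc_ne_dtgt hpn hd (hS ⟨hs, mem_walkVerts_iff.mpr (h.dsrc_mem_vertexList hdw)⟩
    ⟨ht, mem_walkVerts_iff.mpr (dtgt_mem_vertexList u hdw)⟩)

section Metric

variable {l : E → ℝ}

lemma gdist_le_walkLength (hl : ∀ e, 0 < l e) {u v : V} {w : List (Dart E)}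
    (hw : G.IsWalk u w v) : G.gdist l u v ≤ walkLength l w :=
  csInf_le ⟨0, by rintro _ ⟨w, -, rfl⟩; exact walkLength_nonneg hl w⟩
    ⟨w, isWalkFrom_iff_isWalk.mpr hw, rfl⟩

lemma gdist_nonneg (hl : ∀ e, 0 < l e) (u v : V) : 0 ≤ G.gdist l u v :=
  Real.sInf_nonneg (by rintro _ ⟨w, -, rfl⟩; exact walkLength_nonneg hl w)

lemma gdist_self (hl : ∀ e, 0 < l e) (u : V) : G.gdist l u u = 0 :=
  le_antisymm (by simpa [walkLength] using gdist_le_walkLength hl (.nil (G := G) u))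
    (gdist_nonneg hl u u)

/-- Finiteness enters here: a shortest walk can be sought among the finitely many paths. -/
lemma exists_isWalk_walkLength_eq_gdist [Finite V] [Finite E] (hl : ∀ e, 0 < l e)
    (hconn : G.Conn) (u v : V) : ∃ w, G.IsWalk u w v ∧ walkLength l w = G.gdist l u v := by
  set paths := {p | G.IsWalk u p v ∧ (G.vertexList u p).Nodup}
  have hfin : paths.Finite := (List.finite_length_le (Dart E) (Nat.card V)).subset
    fun p hp => by simpa [vertexList] using (hp.2.length_le_natCard).trans' (by simp [vertexList])
  obtain ⟨w₀, hw₀⟩ := hconn u v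
  obtain ⟨p₀, -, hp₀⟩ := (isWalkFrom_iff_isWalk.mp hw₀).exists_nodup_sublist
  obtain ⟨p, hp, hmin⟩ := Set.exists_min_image paths (walkLength l) hfin ⟨p₀, hp₀⟩
  refine ⟨p, hp.1, le_antisymm (le_csInf ⟨_, w₀, hw₀, rfl⟩ ?_) (gdist_le_walkLength hl hp.1)⟩
  rintro _ ⟨w, hw, rfl⟩
  obtain ⟨q, hq, hqw⟩ := (isWalkFrom_iff_isWalk.mp hw).exists_nodup_sublist
  exact (hmin q hqw).trans (walkLength_le_of_sublist hl hq)

variable [Finite V] [Finite E]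

lemma gdist_pos (hl : ∀ e, 0 < l e) (hconn : G.Conn) {u v : V} (huv : u ≠ v) :
    0 < G.gdist l u v := by
  obtain ⟨w, hw, hwl⟩ := exists_isWalk_walkLength_eq_gdist hl hconn u v
  exact hwl ▸ walkLength_pos hl (hw.ne_nil huv)

lemma gdist_comm (hl : ∀ e, 0 < l e) (hconn : G.Conn) (u v : V) :
    G.gdist l u v = G.gdist l v u := by
  suffices ∀ a b, G.gdist l a b ≤ G.gdist l b a from le_antisymm (this u v) (this v u)
  intro a b
  obtain ⟨w, hw, hwl⟩ := exists_isWalk_walkLength_eq_gdist hl hconn b a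
  exact (gdist_le_walkLength hl hw.reverse).trans_eq (by rw [walkLength_reverse_map_dflip, hwl])

lemma gdist_triangle (hl : ∀ e, 0 < l e) (hconn : G.Conn) (u v z : V) :
    G.gdist l u z ≤ G.gdist l u v + G.gdist l v z := by
  obtain ⟨w₁, hw₁, hl₁⟩ := exists_isWalk_walkLength_eq_gdist hl hconn u v
  obtain ⟨w₂, hw₂, hl₂⟩ := exists_isWalk_walkLength_eq_gdist hl hconn v z
  simpa [walkLength_append, hl₁, hl₂] using gdist_le_walkLength hl (hw₁.append hw₂)

end Metric

def blockEdges (G : Multigraph V E) (B : Block G) : Set E :=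
  {e | ∃ c : {w : List (Dart E) // G.IsCycle w}, Quot.mk (CycleRel G) c = B ∧ e ∈ edges c.1}

lemma edges_subset_blockEdges (c : {w : List (Dart E) // G.IsCycle w}) :
    edges c.1 ⊆ blockEdges G (Quot.mk _ c) :=
  fun _ he => ⟨c, rfl, he⟩

lemma vertsOf_subset_vertsOfBlock (c : {w : List (Dart E) // G.IsCycle w}) :
    G.vertsOf c.1 ⊆ vertsOfBlock G (Quot.mk _ c) :=
  fun _ hv => ⟨c, rfl, hv⟩

lemma vertsOfBlock_nonempty (B : Block G) : (vertsOfBlock G B).Nonempty := by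
  obtain ⟨c, rfl⟩ := Quot.exists_rep B
  obtain ⟨d, w, hw⟩ := List.exists_cons_of_ne_nil c.2.1.1
  exact ⟨G.dsrc d, vertsOf_subset_vertsOfBlock c ⟨d, hw ▸ List.mem_cons_self, rfl⟩⟩

lemma eq_of_mem_blockEdges {B B' : Block G} {e : E} (h : e ∈ blockEdges G B)
    (h' : e ∈ blockEdges G B') : B = B' := by
  obtain ⟨c, rfl, hc⟩ := h
  obtain ⟨c', rfl, hc'⟩ := h'
  exact Quot.sound ⟨e, hc, hc'⟩

lemma dsrc_mem_vertsOfBlock {B : Block G} {d : Dart E} (hd : d.1 ∈ blockEdges G B) :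
    G.dsrc d ∈ vertsOfBlock G B := by
  obtain ⟨c, rfl, hc⟩ := hd
  exact vertsOf_subset_vertsOfBlock c (c.2.1.dsrc_mem_vertsOf_of_fst_mem hc)

lemma dtgt_mem_vertsOfBlock {B : Block G} {d : Dart E} (hd : d.1 ∈ blockEdges G B) :
    G.dtgt d ∈ vertsOfBlock G B :=
  G.dsrc_dflip d ▸ dsrc_mem_vertsOfBlock (d := dflip d) hd

lemma CycleRel.exists_mem_vertsOf {c₁ c₂ : {w : List (Dart E) // G.IsCycle w}}
    (h : CycleRel G c₁ c₂) : ∃ z ∈ G.vertsOf c₁.1, z ∈ G.vertsOf c₂.1 := by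
  obtain ⟨e, h₁, h₂⟩ := h
  exact ⟨G.dsrc (e, true), c₁.2.1.dsrc_mem_vertsOf_of_fst_mem h₁,
    c₂.2.1.dsrc_mem_vertsOf_of_fst_mem h₂⟩

lemma joinedWithin_of_eqvGen {c₁ c₂ : {w : List (Dart E) // G.IsCycle w}}
    (h : Relation.EqvGen (CycleRel G) c₁ c₂) :
    ∀ u ∈ G.vertsOf c₁.1, ∀ v ∈ G.vertsOf c₂.1,
      G.JoinedWithin (blockEdges G (Quot.mk _ c₁)) u v := by
  induction h with
  | rel a b hab =>
    intro u hu v hv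
    obtain ⟨z, hza, hzb⟩ := hab.exists_mem_vertsOf
    refine ((a.2.1.joinedWithin hu hza).mono (edges_subset_blockEdges a)).trans ?_
    rw [Quot.sound hab]
    exact (b.2.1.joinedWithin hzb hv).mono (edges_subset_blockEdges b)
  | refl a => exact fun u hu v hv => (a.2.1.joinedWithin hu hv).mono (edges_subset_blockEdges a)
  | symm a b hab ih =>
    intro u hu v hv
    rw [← Quot.eqvGen_sound hab]
    exact (ih v hv u hu).symm
  | trans a b c hab _ ih₁ ih₂ =>
    intro u hu v hv
    obtain ⟨d, w, hw⟩ := List.exists_cons_of_ne_nil b.2.1.1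
    have hz : G.dsrc d ∈ G.vertsOf b.1 := ⟨d, hw ▸ List.mem_cons_self, rfl⟩
    refine (ih₁ u hu _ hz).trans ?_
    rw [Quot.eqvGen_sound hab]
    exact ih₂ _ hz v hv

lemma joinedWithin_blockEdges {B : Block G} {u v : V} (hu : u ∈ vertsOfBlock G B)
    (hv : v ∈ vertsOfBlock G B) : G.JoinedWithin (blockEdges G B) u v := by
  obtain ⟨c₁, rfl, hu⟩ := hu
  obtain ⟨c₂, hc, hv⟩ := hv
  exact joinedWithin_of_eqvGen (Quot.eqvGen_exact hc.symm) u hu v hv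

section Gate

variable {B : Block G}

lemma mk_eq_of_mem_blockEdges (c : {w : List (Dart E) // G.IsCycle w}) {d : Dart E}
    (hd : d ∈ c.1) (hB : d.1 ∈ blockEdges G B) : Quot.mk _ c = B :=
  eq_of_mem_blockEdges (edges_subset_blockEdges c (fst_mem_edges hd)) hB

/-- A path leaving `B` at `c` and coming back first at `c'` would close up, with a path inside
`B` from `c'` to `c`, to a cycle of `B`. -/
lemma IsWalk.eq_of_noDartInside_of_dsrc_notMem {c c' : V} {p : List (Dart E)}
    (hp : G.IsWalk c p c') (hpn : (G.vertexList c p).Nodup) (hc : c ∈ vertsOfBlock G B)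
    (hc' : c' ∈ vertsOfBlock G B) (hfree : G.NoDartInside (vertsOfBlock G B) p)
    (hsrc : ∀ d ∈ p, G.dsrc d ≠ c → G.dsrc d ∉ vertsOfBlock G B) : c = c' := by
  by_contra hne
  obtain ⟨q₀, hq₀, hq₀B⟩ := joinedWithin_blockEdges hc' hc
  obtain ⟨q, hsub, hq, hqn⟩ := hq₀.exists_nodup_sublist
  have hqB : ∀ d ∈ q, d.1 ∈ blockEdges G B := fun d hd => hq₀B d (hsub.subset hd)
  have hedges : (p.map Prod.fst).Disjoint (q.map Prod.fst) := by
    intro e he he'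
    obtain ⟨d, hd, rfl⟩ := List.mem_map.mp he
    obtain ⟨d', hd', he'⟩ := List.mem_map.mp he'
    have hdB : d.1 ∈ blockEdges G B := he' ▸ hqB d' hd'
    exact (hfree d hd).elim (· (dsrc_mem_vertsOfBlock hdB)) (· (dtgt_mem_vertsOfBlock hdB))
  have hsrcs : (p.map G.dsrc).Disjoint (q.map G.dsrc) := by
    intro z hz hz'
    obtain ⟨d, hd, rfl⟩ := List.mem_map.mp hz
    obtain ⟨d', hd', he⟩ := List.mem_map.mp hz'
    by_cases hdc : G.dsrc d = c
    · exact hq.end_notMem_map_dsrc hqn (hdc ▸ hz')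
    · exact hsrc d hd hdc (he ▸ dsrc_mem_vertsOfBlock (hqB d' hd'))
  have hcyc := hp.isCycle_append hq hne hpn hqn hedges hsrcs
  obtain ⟨d₁, q', rfl⟩ := List.exists_cons_of_ne_nil (hq.ne_nil (Ne.symm hne))
  have hclass := mk_eq_of_mem_blockEdges ⟨_, hcyc⟩ (List.mem_append_right p List.mem_cons_self)
    (hqB d₁ List.mem_cons_self)
  obtain ⟨d, p', rfl⟩ := List.exists_cons_of_ne_nil (hp.ne_nil hne)
  obtain ⟨rfl, -⟩ := isWalk_cons.mp hp
  have hout : G.dtgt d ∉ vertsOfBlock G B := (hfree d List.mem_cons_self).resolve_left (· hc)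
  exact hout (hclass ▸ vertsOf_subset_vertsOfBlock ⟨_, hcyc⟩
    (hcyc.1.dtgt_mem_vertsOf (List.mem_append_left _ List.mem_cons_self)))

lemma IsWalk.eq_of_noDartInside_of_nodup {c c' : V} {p : List (Dart E)}
    (hp : G.IsWalk c p c') (hpn : (G.vertexList c p).Nodup) (hc : c ∈ vertsOfBlock G B)
    (hc' : c' ∈ vertsOfBlock G B) (hfree : G.NoDartInside (vertsOfBlock G B) p) : c = c' := by
  by_contra hne
  obtain ⟨d, rest, rfl⟩ := List.exists_cons_of_ne_nil (hp.ne_nil hne)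
  obtain ⟨rfl, hrest⟩ := isWalk_cons.mp hp
  obtain ⟨α, w₁, w₂, rfl, hw₁, hα, hw₁B⟩ := hrest.exists_first_hit (· ∈ vertsOfBlock G B) hc'
  rw [← List.cons_append, vertexList_append] at hpn
  have hcα : G.dsrc d ≠ α := by
    intro h
    have := (List.nodup_cons.mp (List.nodup_append.mp hpn).1).1
    exact this (h ▸ hw₁.end_mem_vertexList)
  refine hcα ((isWalk_cons.mpr ⟨rfl, hw₁⟩).eq_of_noDartInside_of_dsrc_notMem
    (List.nodup_append.mp hpn).1 hc hα (hfree.subset ?_) ?_)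
  · exact List.cons_subset_cons d (List.subset_append_left w₁ w₂)
  · intro d' hd' hne'
    exact hw₁B d' ((List.mem_cons.mp hd').resolve_left (by rintro rfl; exact hne' rfl))

lemma IsWalk.eq_of_noDartInside {c c' : V} {w : List (Dart E)} (hw : G.IsWalk c w c')
    (hc : c ∈ vertsOfBlock G B) (hc' : c' ∈ vertsOfBlock G B)
    (hfree : G.NoDartInside (vertsOfBlock G B) w) : c = c' := by
  obtain ⟨p, hsub, hp, hpn⟩ := hw.exists_nodup_sublist
  exact hp.eq_of_noDartInside_of_nodup hpn hc hc' (hfree.subset hsub.subset)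

lemma mem_blockEdges_of_dsrc_mem_of_dtgt_mem {d : Dart E} (hne : G.dsrc d ≠ G.dtgt d)
    (hs : G.dsrc d ∈ vertsOfBlock G B) (ht : G.dtgt d ∈ vertsOfBlock G B) :
    d.1 ∈ blockEdges G B := by
  obtain ⟨q₀, hq₀, hq₀B⟩ := joinedWithin_blockEdges ht hs
  obtain ⟨q, hsub, hq, hqn⟩ := hq₀.exists_nodup_sublist
  have hqB : ∀ d ∈ q, d.1 ∈ blockEdges G B := fun d hd => hq₀B d (hsub.subset hd)
  by_cases hdq : d.1 ∈ q.map Prod.fst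
  · obtain ⟨d', hd', he⟩ := List.mem_map.mp hdq
    exact he ▸ hqB d' hd'
  have hd : G.IsWalk (G.dsrc d) [d] (G.dtgt d) := isWalk_cons.mpr ⟨rfl, .nil _⟩
  have hcyc := hd.isCycle_append hq hne (by simp [vertexList, hne]) hqn (by simpa using hdq)
    (by simpa using hq.end_notMem_map_dsrc hqn)
  obtain ⟨d₁, q', rfl⟩ := List.exists_cons_of_ne_nil (hq.ne_nil hne.symm)
  rw [← mk_eq_of_mem_blockEdges ⟨_, hcyc⟩ (List.mem_append_right [d] List.mem_cons_self)
    (hqB d₁ List.mem_cons_self)]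
  exact edges_subset_blockEdges _ (fst_mem_edges (List.mem_append_left _ List.mem_cons_self))

lemma exists_isWalk_noDartInside_of_ne {B' : Block G} (hne : B ≠ B') {a b : V}
    (ha : a ∈ vertsOfBlock G B') (hb : b ∈ vertsOfBlock G B') :
    ∃ p, G.IsWalk a p b ∧ G.NoDartInside (vertsOfBlock G B) p := by
  obtain ⟨q, hq, hqB⟩ := joinedWithin_blockEdges ha hb
  obtain ⟨p, hsub, hp, hpn⟩ := hq.exists_nodup_sublist
  refine ⟨p, hp, fun d hd => ?_⟩
  by_contra! ⟨hs, ht⟩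
  exact hne (eq_of_mem_blockEdges (mem_blockEdges_of_dsrc_mem_of_dtgt_mem
    (hp.dsrc_ne_dtgt hpn hd) hs ht) (hqB d (hsub.subset hd)))

end Gate

section BlockDist

variable {l : E → ℝ}

lemma blockDist_nonneg (hl : ∀ e, 0 < l e) (B₁ B₂ : Block G) : 0 ≤ blockDist G l B₁ B₂ :=
  Real.sInf_nonneg (by rintro _ ⟨u, -, v, -, rfl⟩; exact gdist_nonneg hl u v)

lemma blockDist_le_gdist (hl : ∀ e, 0 < l e) {B₁ B₂ : Block G} {u v : V}
    (hu : u ∈ vertsOfBlock G B₁) (hv : v ∈ vertsOfBlock G B₂) :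
    blockDist G l B₁ B₂ ≤ G.gdist l u v :=
  csInf_le ⟨0, by rintro _ ⟨u, -, v, -, rfl⟩; exact gdist_nonneg hl u v⟩ ⟨u, hu, v, hv, rfl⟩

lemma exists_gdist_eq_blockDist [Finite V] (B₁ B₂ : Block G) :
    ∃ u ∈ vertsOfBlock G B₁, ∃ v ∈ vertsOfBlock G B₂, G.gdist l u v = blockDist G l B₁ B₂ := by
  set dists := {x | ∃ u ∈ vertsOfBlock G B₁, ∃ v ∈ vertsOfBlock G B₂, G.gdist l u v = x}
  have hfin : dists.Finite := (Set.finite_range fun p : V × V => G.gdist l p.1 p.2).subset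
    (by rintro _ ⟨u, -, v, -, rfl⟩; exact ⟨(u, v), rfl⟩)
  obtain ⟨u, hu⟩ := vertsOfBlock_nonempty B₁
  obtain ⟨v, hv⟩ := vertsOfBlock_nonempty B₂
  have hne : dists.Nonempty := ⟨_, u, hu, v, hv, rfl⟩
  exact hne.csInf_mem hfin

variable [Finite V] [Finite E]

lemma blockDist_eq_zero_iff (hl : ∀ e, 0 < l e) (hconn : G.Conn) {B₁ B₂ : Block G} :
    blockDist G l B₁ B₂ = 0 ↔ ∃ v, v ∈ vertsOfBlock G B₁ ∧ v ∈ vertsOfBlock G B₂ := by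
  constructor
  · intro h
    obtain ⟨u, hu, v, hv, huv⟩ := exists_gdist_eq_blockDist (l := l) B₁ B₂
    obtain rfl : u = v := by
      by_contra hne
      exact (gdist_pos hl hconn hne).ne' (huv.trans h)
    exact ⟨u, hu, hv⟩
  · rintro ⟨v, h₁, h₂⟩
    exact le_antisymm ((blockDist_le_gdist hl h₁ h₂).trans_eq (gdist_self hl v))
      (blockDist_nonneg hl B₁ B₂)

/-- Follow a shortest walk from a closest vertex `v` of `B'` until it first meets `B₁`, at `α`;
backwards, and continued inside `B'`, it is `B₁`-free. -/
lemma exists_isWalk_noDartInside_to_block (hl : ∀ e, 0 < l e) (hconn : G.Conn)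
    (B₁ : Block G) {B' : Block G} {x : V} (hx : x ∈ vertsOfBlock G B') :
    ∃ v ∈ vertsOfBlock G B', ∃ α ∈ vertsOfBlock G B₁, G.gdist l v α ≤ blockDist G l B₁ B' ∧
      ∃ p, G.IsWalk α p x ∧ G.NoDartInside (vertsOfBlock G B₁) p := by
  by_cases hB : B₁ = B'
  · subst hB
    exact ⟨x, hx, x, hx, (gdist_self hl x).trans_le (blockDist_nonneg hl _ _), [], .nil x,
      by simp [NoDartInside]⟩
  obtain ⟨u, hu, v, hv, huv⟩ := exists_gdist_eq_blockDist (l := l) B₁ B'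
  obtain ⟨w, hw, hwl⟩ := exists_isWalk_walkLength_eq_gdist hl hconn v u
  obtain ⟨α, w₁, w₂, rfl, hw₁, hα, hw₁B⟩ := hw.exists_first_hit (· ∈ vertsOfBlock G B₁) hu
  obtain ⟨q, hq, hqB⟩ := exists_isWalk_noDartInside_of_ne hB hv hx
  have hw₁free : G.NoDartInside (vertsOfBlock G B₁) w₁ := fun d hd => .inl (hw₁B d hd)
  refine ⟨v, hv, α, hα, ?_, _, hw₁.reverse.append hq, hw₁free.reverse.append hqB⟩
  calc G.gdist l v α ≤ walkLength l w₁ := gdist_le_walkLength hl hw₁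
    _ ≤ walkLength l (w₁ ++ w₂) := walkLength_le_of_sublist hl (List.sublist_append_left w₁ w₂)
    _ = blockDist G l B₁ B' := by rw [hwl, gdist_comm hl hconn, huv]

lemma blockDist_le_add_of_noDartInside (hl : ∀ e, 0 < l e) (hconn : G.Conn)
    {B₁ B₂ B₃ : Block G} {x y : V} {w : List (Dart E)} (hx : x ∈ vertsOfBlock G B₂)
    (hy : y ∈ vertsOfBlock G B₃) (hw : G.IsWalk x w y)
    (hfree : G.NoDartInside (vertsOfBlock G B₁) w) :
    blockDist G l B₂ B₃ ≤ blockDist G l B₁ B₂ + blockDist G l B₁ B₃ := by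
  obtain ⟨v₂, hv₂, α, hα, hd₂, p₂, hp₂, hp₂B⟩ :=
    exists_isWalk_noDartInside_to_block hl hconn B₁ hx
  obtain ⟨v₃, hv₃, β, hβ, hd₃, p₃, hp₃, hp₃B⟩ :=
    exists_isWalk_noDartInside_to_block hl hconn B₁ hy
  obtain rfl : α = β := ((hp₂.append hw).append hp₃.reverse).eq_of_noDartInside hα hβ
    ((hp₂B.append hfree).append hp₃B.reverse)
  calc blockDist G l B₂ B₃ ≤ G.gdist l v₂ v₃ := blockDist_le_gdist hl hv₂ hv₃
    _ ≤ G.gdist l v₂ α + G.gdist l α v₃ := gdist_triangle hl hconn _ _ _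
    _ ≤ blockDist G l B₁ B₂ + blockDist G l B₁ B₃ := by
      rw [gdist_comm hl hconn α v₃]
      exact add_le_add hd₂ hd₃

end BlockDist

end Multigraph

/-- in a connected metric graph, two distinct blocks are at distance zero
iff they share a vertex; and if `d(B₂,B₃) > d(B₁,B₂) + d(B₁,B₃)`, then every distance
realizing path between `B₂` and `B₃` passes through at least two distinct vertices of
`B₁`. -/
theorem stmt19 {V E : Type} [Fintype V] [Fintype E] (G : Multigraph V E)
    (l : E → ℝ) (hl : ∀ e, 0 < l e) (hconn : G.Conn)
    (B1 B2 B3 : Block G) :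
    (B1 ≠ B2 →
      (blockDist G l B1 B2 = 0 ↔ ∃ v, v ∈ vertsOfBlock G B1 ∧ v ∈ vertsOfBlock G B2)) ∧
    (blockDist G l B1 B2 + blockDist G l B1 B3 < blockDist G l B2 B3 →
      ∀ x ∈ vertsOfBlock G B2, ∀ y ∈ vertsOfBlock G B3, ∀ w,
        G.IsWalkFrom w x y →
        Multigraph.walkLength l w = blockDist G l B2 B3 →
        ∃ a b, a ∈ vertsOfBlock G B1 ∧ b ∈ vertsOfBlock G B1 ∧ a ≠ b ∧
          a ∈ walkVerts G x w ∧ b ∈ walkVerts G x w) := by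
  refine ⟨fun _ => blockDist_eq_zero_iff hl hconn, fun hlt x hx y hy w hw _ => ?_⟩
  by_contra hmeet
  have hsub : (vertsOfBlock G B1 ∩ walkVerts G x w).Subsingleton := by
    rintro a ⟨ha, ha'⟩ b ⟨hb, hb'⟩
    by_contra hab
    exact hmeet ⟨a, b, ha, hb, hab, ha', hb'⟩
  obtain ⟨p, hp, hfree⟩ := (isWalkFrom_iff_isWalk.mp hw).exists_noDartInside hsub
  exact hlt.not_ge (blockDist_le_add_of_noDartInside hl hconn hx hy hp hfree)
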